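/- arXiv:1411.4064 — 2 statements merged into one kernel-verified Lean document; each statement's English description precedes it below -/
import Mathlib

section
/- The maximum of the relaxed detection-based tracking objective over continuous distributions equals the maximum of the combinatorial tracking objective over index sequences: max over (p^t ∈ Δ({1,...,J^t}))_{t=1..T} of ∑_t ∑_j p^t_j f(b^t_j) + ∑_{t=2}^T ∑_{j',j} p^{t-1}_{j'} p^t_j g(b^{t-1}_{j'}, b^t_j) equals max over index sequences (j^1,...,j^T) of ∑_t f(b^t_{j^t}) + ∑_{t=2}^T g(b^{t-1}_{j^{t-1}}, b^t_{j^t}). -/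
/-!
Draw the detection of frame `t` from `p t`, independently across frames. The relaxed objective is
then the expected value of the combinatorial one: each unary term is the expectation of a function
of one frame, and, adjacent frames being distinct coordinates, each pairwise term is an expectation
under the product of two marginals. An expectation never exceeds the maximum, and the relaxed
objective attains the maximum at the point masses of an optimal track.
-/

open Finset

section ProductWeights

variable {ι : Type*} [Fintype ι] [DecidableEq ι] {β : ι → Type*}

theorem prod_mulSingle_apply (s : ι) (v : β s → ℝ) (a : ∀ i, β i) :
    ∏ i, Pi.mulSingle (M := fun i => β i → ℝ) s v i (a i) = v (a s) := by
  rw [Fintype.prod_eq_single s fun i hi => by simp [Pi.mulSingle_eq_of_ne hi],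
    Pi.mulSingle_eq_same]

variable [∀ i, Fintype (β i)]

theorem sum_prod_mul_prod (p c : ∀ i, β i → ℝ) :
    ∑ a : ∀ i, β i, (∏ i, p i (a i)) * ∏ i, c i (a i) = ∏ i, ∑ x, p i x * c i x := by
  simp_rw [Fintype.prod_sum, prod_mul_distrib]

variable {p : ∀ i, β i → ℝ}

theorem sum_prod_eq_one (hp : ∀ i, ∑ x, p i x = 1) : ∑ a : ∀ i, β i, ∏ i, p i (a i) = 1 := by
  rw [← Fintype.prod_sum, Fintype.prod_eq_one _ hp]

theorem sum_prod_mul_apply (hp : ∀ i, ∑ x, p i x = 1) (s : ι) (v : β s → ℝ) :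
    ∑ a : ∀ i, β i, (∏ i, p i (a i)) * v (a s) = ∑ x, p s x * v x := by
  set c : ∀ i, β i → ℝ := Pi.mulSingle s v
  calc _ = ∑ a : ∀ i, β i, (∏ i, p i (a i)) * ∏ i, c i (a i) := by
        simp only [c, prod_mulSingle_apply]
    _ = ∏ i, ∑ x, p i x * c i x := sum_prod_mul_prod p c
    _ = _ := by
      rw [Fintype.prod_eq_single s fun i hi => by simp [c, Pi.mulSingle_eq_of_ne hi, hp]]
      simp [c]

theorem sum_prod_mul_apply_mul_apply (hp : ∀ i, ∑ x, p i x = 1) {s s' : ι} (hss : s ≠ s')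
    (v : β s → ℝ) (u : β s' → ℝ) :
    ∑ a : ∀ i, β i, (∏ i, p i (a i)) * (v (a s) * u (a s'))
      = (∑ x, p s x * v x) * ∑ y, p s' y * u y := by
  set c : ∀ i, β i → ℝ := Pi.mulSingle s v * Pi.mulSingle s' u
  calc _ = ∑ a : ∀ i, β i, (∏ i, p i (a i)) * ∏ i, c i (a i) := by
        simp [c, prod_mul_distrib, prod_mulSingle_apply]
    _ = ∏ i, ∑ x, p i x * c i x := sum_prod_mul_prod p c
    _ = _ := by
      rw [Fintype.prod_eq_mul s s' hss fun i hi => by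
        simp [c, Pi.mulSingle_eq_of_ne hi.1, Pi.mulSingle_eq_of_ne hi.2, hp]]
      simp [c, Pi.mulSingle_eq_of_ne hss, Pi.mulSingle_eq_of_ne hss.symm]

theorem sum_prod_mul_apply₂ (hp : ∀ i, ∑ x, p i x = 1) {s s' : ι} (hss : s ≠ s')
    (φ : β s → β s' → ℝ) :
    ∑ a : ∀ i, β i, (∏ i, p i (a i)) * φ (a s) (a s')
      = ∑ x, ∑ y, p s x * p s' y * φ x y := by
  classical
  have hφ (a : ∀ i, β i) : φ (a s) (a s') = ∑ x, (if a s = x then 1 else 0) * φ x (a s') := by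
    simp
  simp_rw [hφ, mul_sum]
  rw [sum_comm]
  refine sum_congr rfl fun x _ => ?_
  rw [sum_prod_mul_apply_mul_apply hp hss (fun z => if z = x then 1 else 0) (φ x)]
  simp [mul_sum, mul_assoc]

end ProductWeights

section Tracking

variable {J : ℕ → ℕ} (f : (t : ℕ) → Fin (J t) → ℝ)
  (g : (t : ℕ) → Fin (J t) → Fin (J (t + 1)) → ℝ)

def trackScore (T : ℕ) (j : ∀ t, Fin (J t)) : ℝ :=
  (∑ t ∈ range T, f t (j t)) + ∑ t ∈ range (T - 1), g t (j t) (j (t + 1))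

def relaxedTrackScore (T : ℕ) (p : (t : ℕ) → Fin (J t) → ℝ) : ℝ :=
  (∑ t ∈ range T, ∑ i, p t i * f t i) +
    ∑ t ∈ range (T - 1), ∑ i', ∑ i, p t i' * p (t + 1) i * g t i' i

theorem trackScore_congr {T : ℕ} {j j' : ∀ t, Fin (J t)} (h : ∀ t < T, j t = j' t) :
    trackScore f g T j = trackScore f g T j' := by
  unfold trackScore
  congr 1
  · exact sum_congr rfl fun t ht => by rw [h t (mem_range.mp ht)]
  · refine sum_congr rfl fun t ht => ?_
    have ht := mem_range.mp ht
    rw [h t (by omega), h (t + 1) (by omega)]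

theorem relaxedTrackScore_indicator {T : ℕ} (j : ∀ t, Fin (J t)) :
    relaxedTrackScore f g T (fun t i => if i = j t then 1 else 0) = trackScore f g T j := by
  simp [relaxedTrackScore, trackScore, ite_mul]

def extendPrefix {T : ℕ} (j₀ : ∀ t, Fin (J t)) (a : ∀ s : Fin T, Fin (J s)) (t : ℕ) :
    Fin (J t) :=
  if h : t < T then a ⟨t, h⟩ else j₀ t

theorem extendPrefix_of_lt {T : ℕ} (j₀ : ∀ t, Fin (J t)) (a : ∀ s : Fin T, Fin (J s)) {t : ℕ}
    (h : t < T) : extendPrefix j₀ a t = a ⟨t, h⟩ :=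
  dif_pos h

theorem exists_forall_trackScore_le {T : ℕ} (j₀ : ∀ t, Fin (J t)) :
    ∃ jmax : ∀ t, Fin (J t), ∀ j, trackScore f g T j ≤ trackScore f g T jmax := by
  obtain ⟨a, -, ha⟩ := exists_max_image univ
    (fun a : ∀ s : Fin T, Fin (J s) => trackScore f g T (extendPrefix j₀ a))
    ⟨fun s => j₀ s, mem_univ _⟩
  refine ⟨extendPrefix j₀ a, fun j => ?_⟩
  rw [trackScore_congr f g fun t ht => (extendPrefix_of_lt j₀ (fun s => j s) ht).symm]
  exact ha _ (mem_univ _)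

theorem relaxedTrackScore_eq_sum {T : ℕ} {p : (t : ℕ) → Fin (J t) → ℝ}
    (hp : ∀ t, ∑ i, p t i = 1) (j₀ : ∀ t, Fin (J t)) :
    relaxedTrackScore f g T p = ∑ a : ∀ s : Fin T, Fin (J s),
      (∏ s : Fin T, p s (a s)) * trackScore f g T (extendPrefix j₀ a) := by
  have hp' : ∀ s : Fin T, ∑ i, p s i = 1 := fun s => hp s
  simp only [relaxedTrackScore, trackScore, mul_add, sum_add_distrib, mul_sum]
  congr 1 <;> rw [sum_comm] <;> refine sum_congr rfl fun t ht => ?_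
  · have ht := mem_range.mp ht
    simp only [extendPrefix_of_lt j₀ _ ht]
    exact (sum_prod_mul_apply hp' ⟨t, ht⟩ (f t)).symm
  · have ht := mem_range.mp ht
    simp only [extendPrefix_of_lt j₀ _ (show t < T by omega),
      extendPrefix_of_lt j₀ _ (show t + 1 < T by omega)]
    exact (sum_prod_mul_apply₂ hp' (s := ⟨t, by omega⟩) (s' := ⟨t + 1, by omega⟩)
      (by simp) (g t)).symm

theorem relaxedTrackScore_le {T : ℕ} {p : (t : ℕ) → Fin (J t) → ℝ}
    (hp₀ : ∀ t i, 0 ≤ p t i) (hp₁ : ∀ t, ∑ i, p t i = 1) {M : ℝ} (j₀ : ∀ t, Fin (J t))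
    (hM : ∀ j, trackScore f g T j ≤ M) :
    relaxedTrackScore f g T p ≤ M := by
  calc relaxedTrackScore f g T p = ∑ a : ∀ s : Fin T, Fin (J s),
        (∏ s : Fin T, p s (a s)) * trackScore f g T (extendPrefix j₀ a) :=
        relaxedTrackScore_eq_sum f g hp₁ j₀
    _ ≤ ∑ a : ∀ s : Fin T, Fin (J s), (∏ s : Fin T, p s (a s)) * M :=
        sum_le_sum fun a _ => mul_le_mul_of_nonneg_left (hM _) (prod_nonneg fun s _ => hp₀ s _)
    _ = M := by rw [← sum_mul, sum_prod_eq_one fun s : Fin T => hp₁ s, one_mul]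

end Tracking

theorem stmt10_general (T : ℕ) (J : ℕ → ℕ) (hJ : ∀ t, 0 < J t)
    (f : (t : ℕ) → Fin (J t) → ℝ)
    (g : (t : ℕ) → Fin (J t) → Fin (J (t + 1)) → ℝ) :
    ∃ M : ℝ,
      IsGreatest {y | ∃ p : (t : ℕ) → Fin (J t) → ℝ,
          (∀ t, (∀ i, 0 ≤ p t i) ∧ ∑ i, p t i = 1) ∧
          y = (∑ t ∈ Finset.range T, ∑ i, p t i * f t i) +
              ∑ t ∈ Finset.range (T - 1), ∑ i', ∑ i, p t i' * p (t + 1) i * g t i' i} M ∧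
      IsGreatest {y | ∃ j : (t : ℕ) → Fin (J t),
          y = (∑ t ∈ Finset.range T, f t (j t)) +
              ∑ t ∈ Finset.range (T - 1), g t (j t) (j (t + 1))} M := by
  let j₀ : ∀ t, Fin (J t) := fun t => ⟨0, hJ t⟩
  obtain ⟨jmax, hjmax⟩ := exists_forall_trackScore_le f g (T := T) j₀
  refine ⟨trackScore f g T jmax, ⟨?_, ?_⟩, ⟨jmax, rfl⟩, ?_⟩
  · exact ⟨fun t i => if i = jmax t then 1 else 0, fun t => ⟨fun i => by positivity, by simp⟩,
      (relaxedTrackScore_indicator f g jmax).symm⟩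
  · rintro _ ⟨p, hp, rfl⟩
    exact relaxedTrackScore_le f g (fun t => (hp t).1) (fun t => (hp t).2) j₀ hjmax
  · rintro _ ⟨j, rfl⟩
    exact hjmax j

/-- The maximum of the relaxed detection-based tracking objective over
per-frame probability distributions over detections equals the maximum of the combinatorial
tracking objective over index sequences. -/
theorem stmt10 (T : ℕ) (hT : 1 ≤ T) (J : ℕ → ℕ) (hJ : ∀ t, 0 < J t)
    (f : (t : ℕ) → Fin (J t) → ℝ)
    (g : (t : ℕ) → Fin (J t) → Fin (J (t + 1)) → ℝ) :
    ∃ M : ℝ,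
      IsGreatest {y | ∃ p : (t : ℕ) → Fin (J t) → ℝ,
          (∀ t, (∀ i, 0 ≤ p t i) ∧ ∑ i, p t i = 1) ∧
          y = (∑ t ∈ Finset.range T, ∑ i, p t i * f t i) +
              ∑ t ∈ Finset.range (T - 1), ∑ i', ∑ i, p t i' * p (t + 1) i * g t i' i} M ∧
      IsGreatest {y | ∃ j : (t : ℕ) → Fin (J t),
          y = (∑ t ∈ Finset.range T, f t (j t)) +
              ∑ t ∈ Finset.range (T - 1), g t (j t) (j (t + 1))} M :=
  stmt10_general T J hJ f g
end

section
/- The relaxed HMM MAP objective over per-frame state distributions achieves the same maximum as the discrete Viterbi objective: max over (q^t ∈ Δ({1,...,K}))_{t=1..T} of ∑_t ∑_k q^t_k h(k, t) + ∑_{t=2}^T ∑_{k',k} q^{t-1}_{k'} q^t_k a(k',k) equals max over state sequences (k^1,...,k^T) of ∑_t h(k^t, t) + ∑_{t=2}^T a(k^{t-1}, k^t). -/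
/-!
The Viterbi values `V n k` (best score of a path through frames `0, …, n` ending in state `k`)
certify the relaxed objective: since that objective is affine in the distribution of the last
frame, induction on `n` bounds it on frames `0, …, n` by `∑ k, q n k * V n k`, the expectation
of `V n` under the last distribution, hence by `max_k V n k`. Backtracking through the maximisers
of the recursion produces a path attaining each `V n k`, and paths are exactly the one-hot
distributions, on which both objectives agree.
-/

open Finset

variable {S : Type*} (h : S → ℕ → ℝ) (a : S → S → ℝ)

def relaxedScore [Fintype S] (T : ℕ) (q : ℕ → S → ℝ) : ℝ :=
  (∑ t ∈ range T, ∑ k, q t k * h k t) +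
    ∑ t ∈ range (T - 1), ∑ k', ∑ k, q t k' * q (t + 1) k * a k' k

def pathScore (T : ℕ) (s : ℕ → S) : ℝ :=
  (∑ t ∈ range T, h (s t) t) + ∑ t ∈ range (T - 1), a (s t) (s (t + 1))

def viterbi [Fintype S] [Nonempty S] : ℕ → S → ℝ
  | 0, k => h k 0
  | n + 1, k => h k (n + 1) + univ.sup' univ_nonempty fun k' => viterbi n k' + a k' k

lemma sum_mul_le_of_mem_stdSimplex [Fintype S] {p f : S → ℝ} {M : ℝ} (hp : p ∈ stdSimplex ℝ S)
    (hf : ∀ k, f k ≤ M) : ∑ k, p k * f k ≤ M :=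
  calc ∑ k, p k * f k ≤ ∑ k, p k * M :=
        sum_le_sum fun k _ => mul_le_mul_of_nonneg_left (hf k) (hp.1 k)
    _ = M := by rw [← sum_mul, hp.2, one_mul]

lemma relaxedScore_succ_succ [Fintype S] (n : ℕ) (q : ℕ → S → ℝ) :
    relaxedScore h a (n + 2) q = relaxedScore h a (n + 1) q +
      ∑ k, q (n + 1) k * h k (n + 1) + ∑ k', ∑ k, q n k' * q (n + 1) k * a k' k := by
  simp only [relaxedScore, show n + 2 - 1 = n + 1 by omega, Nat.add_sub_cancel, sum_range_succ]
  ring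

lemma pathScore_succ_succ (n : ℕ) (s : ℕ → S) :
    pathScore h a (n + 2) s =
      pathScore h a (n + 1) s + h (s (n + 1)) (n + 1) + a (s n) (s (n + 1)) := by
  simp only [pathScore, show n + 2 - 1 = n + 1 by omega, Nat.add_sub_cancel, sum_range_succ]
  ring

lemma pathScore_congr {T : ℕ} {s s' : ℕ → S} (hs : ∀ t < T, s t = s' t) :
    pathScore h a T s = pathScore h a T s' := by
  unfold pathScore
  congr 1 <;> refine sum_congr rfl fun t ht => ?_ <;> rw [mem_range] at ht
  · rw [hs t ht]
  · rw [hs t (by omega), hs (t + 1) (by omega)]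

lemma relaxedScore_single [Fintype S] [DecidableEq S] (T : ℕ) (s : ℕ → S) :
    relaxedScore h a T (fun t => Pi.single (s t) 1) = pathScore h a T s := by
  simp [relaxedScore, pathScore, Pi.single_apply]

lemma relaxedScore_le_sum_mul_viterbi [Fintype S] [Nonempty S] {q : ℕ → S → ℝ}
    (hq : ∀ t, q t ∈ stdSimplex ℝ S) (n : ℕ) :
    relaxedScore h a (n + 1) q ≤ ∑ k, q n k * viterbi h a n k := by
  induction n with
  | zero => simp [relaxedScore, viterbi]
  | succ n ih =>
    have hmix : ∑ k', q n k' * viterbi h a n k' + ∑ k, q (n + 1) k * h k (n + 1) +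
        ∑ k', ∑ k, q n k' * q (n + 1) k * a k' k =
        ∑ k, q (n + 1) k * (h k (n + 1) + ∑ k', q n k' * (viterbi h a n k' + a k' k)) := by
      have hV : ∑ k', q n k' * viterbi h a n k' =
          ∑ k, q (n + 1) k * ∑ k', q n k' * viterbi h a n k' := by
        rw [← sum_mul, (hq _).2, one_mul]
      rw [hV, sum_comm (f := fun k' k => q n k' * q (n + 1) k * a k' k)]
      simp only [mul_add, sum_add_distrib, mul_sum, mul_left_comm (q (n + 1) _), mul_assoc]
      ring
    calc relaxedScore h a (n + 2) q
        ≤ ∑ k', q n k' * viterbi h a n k' + ∑ k, q (n + 1) k * h k (n + 1) +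
            ∑ k', ∑ k, q n k' * q (n + 1) k * a k' k := by
          rw [relaxedScore_succ_succ]; gcongr
      _ = ∑ k, q (n + 1) k * (h k (n + 1) + ∑ k', q n k' * (viterbi h a n k' + a k' k)) := hmix
      _ ≤ ∑ k, q (n + 1) k * viterbi h a (n + 1) k := by
          gcongr with k
          · exact (hq _).1 k
          · rw [viterbi]
            gcongr
            exact sum_mul_le_of_mem_stdSimplex (hq n) fun k' =>
              le_sup' (f := fun k' => viterbi h a n k' + a k' k) (mem_univ k')

lemma exists_pathScore_eq_viterbi [Fintype S] [Nonempty S] (n : ℕ) (k : S) :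
    ∃ s : ℕ → S, s n = k ∧ pathScore h a (n + 1) s = viterbi h a n k := by
  induction n generalizing k with
  | zero => exact ⟨fun _ => k, rfl, by simp [pathScore, viterbi]⟩
  | succ n ih =>
    classical
    obtain ⟨k', -, hk'⟩ :=
      exists_mem_eq_sup' univ_nonempty fun k' => viterbi h a n k' + a k' k
    obtain ⟨s, hsn, hs⟩ := ih k'
    refine ⟨Function.update s (n + 1) k, by simp, ?_⟩
    rw [pathScore_succ_succ, pathScore_congr h a (s' := s) fun t ht => ?_]
    · rw [Function.update_self, Function.update_of_ne (by omega), hsn, hs, viterbi, hk']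
      ring
    · exact Function.update_of_ne (by omega) _ _

/-- The relaxed HMM MAP objective over per-frame state distributions achieves
the same maximum as the discrete Viterbi objective over state sequences.  (Frames are
indexed 0,…,T−1; h k t is the output log-score of state k at frame t; a k' k is the
transition log-score.) -/
theorem stmt11 (T K : ℕ) (hT : 1 ≤ T) (hK : 1 ≤ K)
    (h : Fin K → ℕ → ℝ) (a : Fin K → Fin K → ℝ) :
    ∃ M : ℝ,
      IsGreatest {y | ∃ q : ℕ → Fin K → ℝ,
          (∀ t, (∀ k, 0 ≤ q t k) ∧ ∑ k, q t k = 1) ∧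
          y = (∑ t ∈ Finset.range T, ∑ k, q t k * h k t) +
              ∑ t ∈ Finset.range (T - 1), ∑ k', ∑ k, q t k' * q (t + 1) k * a k' k} M ∧
      IsGreatest {y | ∃ k : ℕ → Fin K,
          y = (∑ t ∈ Finset.range T, h (k t) t) +
              ∑ t ∈ Finset.range (T - 1), a (k t) (k (t + 1))} M := by
  obtain ⟨n, rfl⟩ : ∃ n, T = n + 1 := ⟨T - 1, by omega⟩
  have : Nonempty (Fin K) := ⟨⟨0, hK⟩⟩
  obtain ⟨kmax, -, hkmax⟩ := exists_max_image univ (viterbi h a n) univ_nonempty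
  obtain ⟨s, -, hs⟩ := exists_pathScore_eq_viterbi h a n kmax
  have relaxed_le (q : ℕ → Fin K → ℝ) (hq : ∀ t, q t ∈ stdSimplex ℝ (Fin K)) :
      relaxedScore h a (n + 1) q ≤ viterbi h a n kmax :=
    (relaxedScore_le_sum_mul_viterbi h a hq n).trans <|
      sum_mul_le_of_mem_stdSimplex (hq n) fun k => hkmax k (mem_univ k)
  refine ⟨viterbi h a n kmax, ⟨⟨fun t => Pi.single (s t) 1, fun t => single_mem_stdSimplex ℝ _,
    (relaxedScore_single h a _ s).trans hs |>.symm⟩, ?_⟩, ⟨s, hs.symm⟩, ?_⟩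
  · rintro y ⟨q, hq, rfl⟩
    exact relaxed_le q hq
  · rintro y ⟨s', rfl⟩
    exact (relaxedScore_single h a _ s').symm.trans_le <|
      relaxed_le _ fun t => single_mem_stdSimplex ℝ _
end
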